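/- Let l > 1 and r ≥ 0 be integers. The number of partitions of n in which every part multiplicity lies in the set {2i + j(2r+1) : 0 ≤ i ≤ l−1, j ∈ {0,1}} equals the number of partitions of n into parts that are either even but not divisible by 2l, or divisible by 2r+1 but not by 4r+2. -/

import Mathlib

open scoped Classical

/-- Number of partitions of `n` whose part multiplicities all lie in `A`. -/
noncomputable def partP (A : Set ℕ) (n : ℕ) : ℕ :=
  (Finset.univ.filter (fun p : Nat.Partition n =>
    ∀ i ∈ p.parts, Multiset.count i p.parts ∈ A)).card

/-- Number of partitions of `n` whose parts all lie in `B`. -/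
noncomputable def partQ (B : Set ℕ) (n : ℕ) : ℕ :=
  (Finset.univ.filter (fun p : Nat.Partition n => ∀ i ∈ p.parts, i ∈ B)).card

/-!
Both sides have product generating functions in `ℤ⟦X⟧`: `∏ₖ ∑_{a ∈ A} X^{ka}` and
`∏_{k ∈ B} (1 - X^k)⁻¹`. Multiplied by the nonzero series `∏ₖ (1 - X^{2k})(1 - X^{(2r+1)k})`,
both become `∏ₖ (1 - X^{2lk})(1 - X^{(4r+2)k})`. For `P` this holds factor by factor, since
`∑_{a ∈ A} x^a = (1 + x^2 + ⋯ + x^{2l-2})(1 + x^{2r+1})`. For `Q`, write each `∏ₖ (1 - X^{ak})`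
as the product over all `m` of `1 - X^m` if `a ∣ m` and `1` otherwise; the identity then also
holds factor by factor, because `B` consists of the multiples of `2` that are not multiples of
`2l` and the multiples of `2r+1` that are not multiples of `2(2r+1)`.
-/

open Finset PowerSeries PowerSeries.WithPiTopology Nat.Partition

theorem hasProd_ite_dvd_iff {M : Type*} [CommMonoid M] [TopologicalSpace M] (f : ℕ → M)
    {a : ℕ} (ha : a ≠ 0) {x : M} :
    HasProd (fun i ↦ if a ∣ i + 1 then f (i + 1) else 1) x ↔
      HasProd (fun i ↦ f ((i + 1) * a)) x := by
  have hpos : ∀ i, 1 ≤ (i + 1) * a := fun i ↦ Nat.one_le_iff_ne_zero.2 (by positivity)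
  have hg : Function.Injective fun i ↦ (i + 1) * a - 1 := fun i j h ↦ by
    have := Nat.eq_of_mul_eq_mul_right (Nat.pos_of_ne_zero ha)
      (Nat.sub_one_cancel (hpos i) (hpos j) h)
    omega
  have hcomp : (fun i ↦ if a ∣ i + 1 then f (i + 1) else 1) ∘ (fun i ↦ (i + 1) * a - 1) =
      fun i ↦ f ((i + 1) * a) := by
    ext i
    simp [Nat.sub_add_cancel (hpos i)]
  rw [← hcomp, hg.hasProd_iff]
  rintro k hk
  rw [if_neg]
  rintro ⟨_ | m, hm⟩
  · omega
  · exact hk ⟨m, by simp only [mul_comm (m + 1)]; omega⟩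

/-- The factor of the `Q`-side identity at a part size `k`, where `a, b, c, d` say that `k` is
divisible by `2, 2r+1, 2l, 4r+2` and `g = (1 - X^k)⁻¹`, `s = 1 - X^k`. -/
theorem ite_mul_ite_mul_ite_eq {M : Type*} [CommMonoid M] {g s : M} (hgs : g * s = 1)
    {a b c d : Prop} [Decidable a] [Decidable b] [Decidable c] [Decidable d]
    (hca : c → a) (hd : d ↔ a ∧ b) :
    (if a ∧ ¬c ∨ b ∧ ¬d then g else 1) * ((if a then s else 1) * (if b then s else 1)) =
      (if c then s else 1) * (if d then s else 1) := by
  by_cases a <;> by_cases b <;> by_cases c <;> simp_all [← mul_assoc]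

theorem four_mul_add_two_dvd_iff (r k : ℕ) : 4 * r + 2 ∣ k ↔ 2 ∣ k ∧ 2 * r + 1 ∣ k := by
  rw [show 4 * r + 2 = 2 * (2 * r + 1) by ring]
  refine ⟨fun h ↦ ⟨dvd_of_mul_right_dvd h, dvd_of_mul_left_dvd h⟩, fun ⟨h2, hodd⟩ ↦ ?_⟩
  exact Nat.Coprime.mul_dvd_of_dvd_of_dvd (Nat.coprime_two_left.2 (odd_two_mul_add_one r)) h2 hodd

def subbaraoMultiplicities (l r : ℕ) : Finset ℕ :=
  (range l ×ˢ range 2).image fun p ↦ 2 * p.1 + p.2 * (2 * r + 1)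

theorem coe_subbaraoMultiplicities (l r : ℕ) :
    (subbaraoMultiplicities l r : Set ℕ) = {x | ∃ i < l, ∃ j < 2, x = 2 * i + j * (2 * r + 1)} := by
  ext x
  simp [subbaraoMultiplicities, eq_comm, and_assoc]

theorem zero_mem_subbaraoMultiplicities {l : ℕ} (hl : 0 < l) (r : ℕ) :
    0 ∈ subbaraoMultiplicities l r :=
  mem_image.2 ⟨(0, 0), by simp [hl], by simp⟩

theorem sum_pow_subbaraoMultiplicities {R : Type*} [CommSemiring R] (l r : ℕ) (x : R) :
    ∑ a ∈ subbaraoMultiplicities l r, x ^ a =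
      (∑ i ∈ range l, x ^ (2 * i)) * (1 + x ^ (2 * r + 1)) := by
  rw [subbaraoMultiplicities, sum_image, sum_product, sum_mul]
  · simp [sum_range_succ, pow_add, mul_add]
  · simp only [coe_product, coe_range, Set.InjOn, Set.mem_prod, Set.mem_Iio, Prod.forall,
      Prod.mk.injEq]
    rintro i j ⟨-, hj⟩ i' j' ⟨-, hj'⟩ h
    interval_cases j <;> interval_cases j' <;> omega

theorem sum_pow_subbaraoMultiplicities_mul {R : Type*} [CommRing R] (l r : ℕ) (x : R) :
    (∑ a ∈ subbaraoMultiplicities l r, x ^ a) * ((1 - x ^ 2) * (1 - x ^ (2 * r + 1))) =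
      (1 - x ^ (2 * l)) * (1 - x ^ (4 * r + 2)) := by
  have hgeom : (∑ i ∈ range l, x ^ (2 * i)) * (1 - x ^ 2) = 1 - x ^ (2 * l) := by
    simpa only [pow_mul] using geom_sum_mul_neg (x ^ 2) l
  have hsq : (1 + x ^ (2 * r + 1)) * (1 - x ^ (2 * r + 1)) = 1 - x ^ (4 * r + 2) := by
    ring
  rw [sum_pow_subbaraoMultiplicities, mul_mul_mul_comm, hgeom, hsq]

theorem partQ_eq_card_restricted (B : Set ℕ) [DecidablePred (· ∈ B)] (n : ℕ) :
    partQ B n = #(restricted n (· ∈ B)) := by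
  unfold partQ restricted
  congr

section Semiring

variable {R : Type*} [CommSemiring R] [TopologicalSpace R]

theorem one_add_tsum_ite_mem_smul_X_pow {A : Set ℕ} {s : Finset ℕ} (hs : ↑s = A) (h0 : 0 ∈ s)
    (k : ℕ) :
    1 + ∑' j, (if j + 1 ∈ A then (1 : R) else 0) • (X : R⟦X⟧) ^ (k * (j + 1)) =
      ∑ a ∈ s, X ^ (k * a) := by
  subst hs
  set f : ℕ → R⟦X⟧ := fun a ↦ (if a ∈ (s : Set ℕ) then (1 : R) else 0) • X ^ (k * a)
  obtain ⟨N, hN⟩ : ∃ N, s ⊆ range (N + 1) :=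
    ⟨s.sup id, fun a ha ↦ mem_range_succ_iff.2 (le_sup (f := id) ha)⟩
  have hsum : ∑ a ∈ s, X ^ (k * a) = ∑ a ∈ range (N + 1), f a := by
    rw [← sum_subset hN (fun a _ ha ↦ by simp [f, ha])]
    exact sum_congr rfl fun a ha ↦ by simp [f, ha]
  rw [hsum, sum_range_succ', tsum_eq_sum (s := range N) fun j hj ↦ ?_, add_comm]
  · simp [f, h0]
  · have : j + 1 ∉ s := fun h ↦ hj (by simpa using hN h)
    simp [this]

theorem hasProd_powerSeriesMk_partP [T2Space R] (A : Set ℕ) :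
    HasProd (fun i ↦ 1 + ∑' j, (if j + 1 ∈ A then (1 : R) else 0) • X ^ ((i + 1) * (j + 1)))
      (PowerSeries.mk fun n ↦ (partP A n : R)) := by
  convert hasProd_genFun (fun _ c ↦ if c ∈ A then (1 : R) else 0) using 1
  simp_rw [genFun, partP, card_filter, Finsupp.prod, prod_boole]
  simp

end Semiring

section Ring

variable {R : Type*} [CommRing R] [TopologicalSpace R]

theorem multipliable_one_sub_X_pow_mul {a : ℕ} (ha : a ≠ 0) :
    Multipliable fun i ↦ (1 : R⟦X⟧) - X ^ ((i + 1) * a) := by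
  nontriviality R
  simp_rw [sub_eq_add_neg]
  apply multipliable_one_add_of_tendsto_order_atTop_nhds_top
  refine ENat.tendsto_nhds_top_iff_natCast_lt.mpr fun n ↦ Filter.eventually_atTop.mpr ⟨n, ?_⟩
  intro m hm
  rw [order_neg, order_X_pow]
  norm_cast
  nlinarith [Nat.pos_of_ne_zero ha]

theorem tprod_one_sub_X_pow_mul_ne_zero [T2Space R] [Nontrivial R] {a : ℕ} (ha : a ≠ 0) :
    ∏' i, (1 - X ^ ((i + 1) * a)) ≠ (0 : R⟦X⟧) := by
  intro h
  have := congrArg constantCoeff h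
  simp [(multipliable_one_sub_X_pow_mul ha).map_tprod _ (continuous_constantCoeff R), zero_pow,
    ha] at this

variable [IsTopologicalRing R] [T2Space R]

theorem partP_mul_tprod_one_sub_X_pow_mul {l : ℕ} (hl : 0 < l) (r : ℕ) :
    PowerSeries.mk (fun n ↦ (partP {x | ∃ i < l, ∃ j < 2, x = 2 * i + j * (2 * r + 1)} n : R)) *
        ((∏' i, (1 - X ^ ((i + 1) * 2))) * ∏' i, (1 - X ^ ((i + 1) * (2 * r + 1)))) =
      (∏' i, (1 - X ^ ((i + 1) * (2 * l)))) * ∏' i, (1 - X ^ ((i + 1) * (4 * r + 2))) := by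
  have h := (hasProd_powerSeriesMk_partP (R := R)
    {x | ∃ i < l, ∃ j < 2, x = 2 * i + j * (2 * r + 1)}).mul
    ((multipliable_one_sub_X_pow_mul two_ne_zero).hasProd.mul
      (multipliable_one_sub_X_pow_mul (by omega : 2 * r + 1 ≠ 0)).hasProd)
  refine (h.congr_fun fun i ↦ ?_).unique <|
    (multipliable_one_sub_X_pow_mul (by omega : 2 * l ≠ 0)).hasProd.mul
      (multipliable_one_sub_X_pow_mul (by omega : 4 * r + 2 ≠ 0)).hasProd
  rw [one_add_tsum_ite_mem_smul_X_pow (coe_subbaraoMultiplicities l r)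
    (zero_mem_subbaraoMultiplicities hl r)]
  simp only [pow_mul (X : R⟦X⟧) (i + 1)]
  exact (sum_pow_subbaraoMultiplicities_mul l r ((X : R⟦X⟧) ^ (i + 1))).symm

theorem partQ_mul_tprod_one_sub_X_pow_mul {l : ℕ} (hl : 0 < l) (r : ℕ) :
    PowerSeries.mk (fun n ↦ (partQ
        {b | (2 ∣ b ∧ ¬ (2 * l) ∣ b) ∨ ((2 * r + 1) ∣ b ∧ ¬ (4 * r + 2) ∣ b)} n : R)) *
        ((∏' i, (1 - X ^ ((i + 1) * 2))) * ∏' i, (1 - X ^ ((i + 1) * (2 * r + 1)))) =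
      (∏' i, (1 - X ^ ((i + 1) * (2 * l)))) * ∏' i, (1 - X ^ ((i + 1) * (4 * r + 2))) := by
  have hE : ∀ a ≠ 0, HasProd (fun i ↦ if a ∣ i + 1 then 1 - X ^ (i + 1) else 1)
      (∏' i, (1 - X ^ ((i + 1) * a)) : R⟦X⟧) := fun a ha ↦
    (hasProd_ite_dvd_iff (fun k ↦ (1 : R⟦X⟧) - X ^ k) ha).2
      (multipliable_one_sub_X_pow_mul ha).hasProd
  simp only [partQ_eq_card_restricted]
  have h := (hasProd_powerSeriesMk_card_restricted R
    (· ∈ {b | (2 ∣ b ∧ ¬ (2 * l) ∣ b) ∨ ((2 * r + 1) ∣ b ∧ ¬ (4 * r + 2) ∣ b)})).mul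
    ((hE 2 two_ne_zero).mul (hE _ (by omega : 2 * r + 1 ≠ 0)))
  refine (h.congr_fun fun i ↦ ?_).unique <|
    (hE _ (by omega : 2 * l ≠ 0)).mul (hE _ (by omega : 4 * r + 2 ≠ 0))
  refine (ite_mul_ite_mul_ite_eq ?_ (dvd_trans (dvd_mul_right 2 l)) ?_).symm
  · simp_rw [pow_mul]
    exact tsum_pow_mul_one_sub_of_constantCoeff_eq_zero (by simp)
  · exact four_mul_add_two_dvd_iff r (i + 1)

end Ring

/-- Subbarao's theorem. -/
theorem subbarao (l r n : ℕ) (hl : 1 < l) :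
    partP {x | ∃ i < l, ∃ j < 2, x = 2 * i + j * (2 * r + 1)} n
      = partQ {b | (2 ∣ b ∧ ¬ (2 * l) ∣ b) ∨ ((2 * r + 1) ∣ b ∧ ¬ (4 * r + 2) ∣ b)} n := by
  have hD : (∏' i, (1 - X ^ ((i + 1) * 2))) * ∏' i, (1 - X ^ ((i + 1) * (2 * r + 1))) ≠
      (0 : ℤ⟦X⟧) :=
    mul_ne_zero (tprod_one_sub_X_pow_mul_ne_zero two_ne_zero)
      (tprod_one_sub_X_pow_mul_ne_zero (by omega))
  have hl0 : 0 < l := by omega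
  have hgf := mul_right_cancel₀ hD <| (partP_mul_tprod_one_sub_X_pow_mul hl0 r).trans
    (partQ_mul_tprod_one_sub_X_pow_mul hl0 r).symm
  simpa using congrArg (coeff n) hgf
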